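/- arXiv:1312.1575 — 2 statements merged into one kernel-verified Lean document; each statement's English description precedes it below -/
import Mathlib

section
/- Let t₀ > 0, ω* = π/t₀, b > 0, c > 0 and z > 0 satisfy b·(z/c + t₀/2) < 1. Then there exists exactly one ε₁ ∈ (0, t₀/2) such that sin(ω*ε₁) = b·(ε₁ + z/c). -/
/-!
The function `g ε = sin (π / t₀ * ε) - b * (ε + z / c)` is strictly concave on `[0, t₀ / 2]`,
negative at `0` and positive at `t₀ / 2`, where the sine equals `1` and the hypothesis gives
`b * (t₀ / 2 + z / c) < 1`. The intermediate value theorem yields a zero, and strict concavity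
rules out a second one.
-/

open Real Set

theorem StrictConcaveOn.existsUnique_zero_of_neg_of_pos {f : ℝ → ℝ} {a b : ℝ} (hab : a ≤ b)
    (hf : StrictConcaveOn ℝ (Icc a b) f) (hcont : ContinuousOn f (Icc a b))
    (ha : f a < 0) (hb : 0 < f b) : ∃! x, x ∈ Ioo a b ∧ f x = 0 := by
  obtain ⟨x, hx, hfx⟩ := intermediate_value_Ioo hab hcont ⟨ha, hb⟩
  -- two zeros `u < v` would make the secant slope on `[v, b]` positive yet below `0`
  have no_two_zeros {u v : ℝ} (hu : u ∈ Ioo a b) (hv : v ∈ Ioo a b) (huv : u < v)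
      (hfu : f u = 0) (hfv : f v = 0) : False := by
    have := hf.slope_anti_adjacent (Ioo_subset_Icc_self hu) (right_mem_Icc.2 hab) huv hv.2
    rw [hfu, hfv, sub_zero, sub_zero, zero_div] at this
    exact (div_pos hb (sub_pos.2 hv.2)).not_gt this
  refine ⟨x, ⟨hx, hfx⟩, fun y ⟨hy, hfy⟩ => ?_⟩
  rcases lt_trichotomy y x with h | h | h
  · exact (no_two_zeros hy hx h hfy hfx).elim
  · exact h
  · exact (no_two_zeros hx hy h hfx hfy).elim

theorem strictConcaveOn_sin_mul {ω : ℝ} (hω : 0 < ω) :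
    StrictConcaveOn ℝ (Icc 0 (π / ω)) fun x => sin (ω * x) := by
  refine ⟨convex_Icc _ _, fun x hx y hy hxy p q hp hq hpq => ?_⟩
  have hmem {t : ℝ} (ht : t ∈ Icc 0 (π / ω)) : ω * t ∈ Icc 0 π :=
    ⟨mul_nonneg hω.le ht.1, (le_div_iff₀' hω).1 ht.2⟩
  have := strictConcaveOn_sin_Icc.2 (hmem hx) (hmem hy) (by simpa [hω.ne'] using hxy) hp hq hpq
  simp only [smul_eq_mul] at this ⊢
  convert this using 2; ring

/-- If `b (z/c + t₀/2) < 1`, then there exists exactly one `ε₁ ∈ (0, t₀/2)`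
such that `sin (ω₊ ε₁) = b (ε₁ + z/c)`, where `ω₊ = π/t₀`. -/
theorem stmt_9 (t₀ b c z : ℝ)
    (ht₀ : 0 < t₀) (hb : 0 < b) (hc : 0 < c) (hz : 0 < z)
    (h : b * (z / c + t₀ / 2) < 1) :
    ∃! ε₁ : ℝ, ε₁ ∈ Set.Ioo 0 (t₀ / 2) ∧
      Real.sin (π / t₀ * ε₁) = b * (ε₁ + z / c) := by
  have hω : 0 < π / t₀ := div_pos pi_pos ht₀
  have hconcave : StrictConcaveOn ℝ (Icc 0 (t₀ / 2))
      fun ε => sin (π / t₀ * ε) - b * (ε + z / c) := by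
    refine ((strictConcaveOn_sin_mul hω).subset (Icc_subset_Icc_right ?_) (convex_Icc _ _))
      |>.sub_convexOn (((convexOn_id (convex_Icc _ _)).add_const _).smul hb.le)
    rw [div_div_cancel₀ pi_ne_zero]
    linarith
  have h_neg : sin (π / t₀ * 0) - b * (0 + z / c) < 0 := by
    rw [mul_zero, sin_zero, zero_add, zero_sub, neg_neg_iff_pos]
    positivity
  have h_pos : 0 < sin (π / t₀ * (t₀ / 2)) - b * (t₀ / 2 + z / c) := by
    rw [show π / t₀ * (t₀ / 2) = π / 2 by field_simp, sin_pi_div_two]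
    linarith
  simpa only [sub_eq_zero] using hconcave.existsUnique_zero_of_neg_of_pos (by linarith)
    (by fun_prop) h_neg h_pos
end

section
/- Let t₀ > 0, ω* = π/t₀, b > 0, c > 0 and z ≥ 0 satisfy b·(z/c + t₀/2) ≤ 1. Then there exists exactly one ε₂ ∈ [0, t₀/2] such that sin(ω*ε₂) = b·(z/c + t₀ − ε₂). -/
open Real Set

/-- If `b (z/c + t₀/2) ≤ 1`, then there exists exactly one `ε₂ ∈ [0, t₀/2]`
such that `sin (ω₊ ε₂) = b (z/c + t₀ - ε₂)`, where `ω₊ = π/t₀`. -/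
theorem stmt_10 (t₀ b c z : ℝ)
    (ht₀ : 0 < t₀) (hb : 0 < b) (hc : 0 < c) (hz : 0 ≤ z)
    (h : b * (z / c + t₀ / 2) ≤ 1) :
    ∃! ε₂ : ℝ, ε₂ ∈ Set.Icc 0 (t₀ / 2) ∧
      Real.sin (π / t₀ * ε₂) = b * (z / c + t₀ - ε₂) := by
  have hω : 0 < π / t₀ := div_pos Real.pi_pos ht₀
  set f : ℝ → ℝ := fun ε => Real.sin (π / t₀ * ε) + b * ε with hf
  have hmap : ∀ x ∈ Icc (0:ℝ) (t₀/2), π / t₀ * x ∈ Icc (-(π/2)) (π/2) := by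
    intro x hx
    constructor
    · have : 0 ≤ π / t₀ * x := mul_nonneg hω.le hx.1
      linarith [Real.pi_pos]
    · have := mul_le_mul_of_nonneg_left hx.2 hω.le
      have heq : π / t₀ * (t₀ / 2) = π / 2 := by field_simp
      linarith [heq ▸ this]
  have hmono : StrictMonoOn f (Icc 0 (t₀/2)) := by
    intro x hx y hy hxy
    have h1 : Real.sin (π / t₀ * x) < Real.sin (π / t₀ * y) :=
      Real.strictMonoOn_sin (hmap x hx) (hmap y hy)
        (by exact mul_lt_mul_of_pos_left hxy hω)
    have h2 : b * x < b * y := mul_lt_mul_of_pos_left hxy hb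
    simp only [hf]
    linarith
  have hcont : ContinuousOn f (Icc 0 (t₀/2)) :=
    (Continuous.add (Real.continuous_sin.comp (continuous_const.mul continuous_id))
      (continuous_const.mul continuous_id)).continuousOn
  have hzc : 0 ≤ z / c := div_nonneg hz hc.le
  have hK : b * (z / c + t₀) ∈ Icc (f 0) (f (t₀/2)) := by
    have hf0 : f 0 = 0 := by simp [hf]
    have hfh : f (t₀/2) = 1 + b * (t₀/2) := by
      have heq : π / t₀ * (t₀ / 2) = π / 2 := by field_simp
      simp [hf, heq, Real.sin_pi_div_two]
    constructor
    · rw [hf0]; positivity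
    · rw [hfh]; nlinarith
  obtain ⟨x, hx, hfx⟩ := intermediate_value_Icc (by linarith) hcont hK
  refine ⟨x, ⟨hx, by simp only [hf] at hfx; linarith⟩, ?_⟩
  rintro y ⟨hy, hsy⟩
  have hfy : f y = b * (z / c + t₀) := by simp only [hf]; linarith
  exact hmono.injOn hy hx (by rw [hfy, hfx])
end
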